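/- arXiv:2501.00415 — 2 statements merged into one kernel-verified Lean document; each statement's English description precedes it below -/
import Mathlib

section
/- Define the outer measure γ on ℝ^d by γ(A) = inf{Σ w(S_i) : A ⊆ ∪ S_i, each S_i a generalized strip}, where w(S) = 2·inf{Lip(f) : S = S(f)}. If A ⊆ ℝ^d satisfies γ(A) = 0, then A is Lebesgue null. -/
open Set MeasureTheory ENNReal RealInnerProductSpace

variable {d : ℕ}

/-- A function is polyhedral if it is the maximum of finitely many affine functions. -/
def IsPolyhedral (g : EuclideanSpace ℝ (Fin d) → ℝ) : Prop :=
  ∃ (n : ℕ) (v : Fin (n + 1) → EuclideanSpace ℝ (Fin d)) (c : Fin (n + 1) → ℝ),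
    ∀ x, g x = Finset.univ.sup' Finset.univ_nonempty (fun i => ⟪v i, x⟫ + c i)

/-- `y` is a proximal point of `f` at `x`: it minimizes `z ↦ f z + ‖x - z‖² / 2`. -/
def IsProxPt (f : EuclideanSpace ℝ (Fin d) → ℝ) (x y : EuclideanSpace ℝ (Fin d)) : Prop :=
  ∀ z, f y + ‖x - y‖ ^ 2 / 2 ≤ f z + ‖x - z‖ ^ 2 / 2

/-- The generalized strip `S(f)`: points `x` such that `f` is not differentiable at
`prox_f(x)`.  (For a polyhedral, hence convex, `f` the proximal point exists and is unique.) -/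
def GStrip (f : EuclideanSpace ℝ (Fin d) → ℝ) : Set (EuclideanSpace ℝ (Fin d)) :=
  {x | ∀ y, IsProxPt f x y → ¬ DifferentiableAt ℝ f y}

/-- A generalized strip is a set of the form `S(f)` for a polyhedral function `f`. -/
def IsGenStrip (S : Set (EuclideanSpace ℝ (Fin d))) : Prop :=
  ∃ f, IsPolyhedral f ∧ GStrip f = S

/-- The width of a generalized strip: `w(S) = 2·inf{Lip f : S = S(f), f polyhedral}`. -/
noncomputable def stripWidth (S : Set (EuclideanSpace ℝ (Fin d))) : ℝ :=
  2 * sInf {L : ℝ | 0 ≤ L ∧ ∃ f, IsPolyhedral f ∧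
    (∀ x y, |f x - f y| ≤ L * ‖x - y‖) ∧ GStrip f = S}

/-- The outer measure `γ`: the infimum of `Σ w(Sᵢ)` over countable covers of `A` by
generalized strips `Sᵢ`. -/
noncomputable def gamma (A : Set (EuclideanSpace ℝ (Fin d))) : ℝ≥0∞ :=
  sInf {t : ℝ≥0∞ | ∃ S : ℕ → Set (EuclideanSpace ℝ (Fin d)),
    (∀ n, IsGenStrip (S n)) ∧ A ⊆ ⋃ n, S n ∧
    t = ∑' n, ENNReal.ofReal (stripWidth (S n))}

lemma poly_convexOn {g : EuclideanSpace ℝ (Fin d) → ℝ} (hg : IsPolyhedral g) :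
    ConvexOn ℝ Set.univ g := by
  obtain ⟨n, v, c, hg⟩ := hg
  refine ⟨convex_univ, fun x _ y _ a b ha hb hab => ?_⟩
  rw [hg, hg, hg]
  refine Finset.sup'_le _ _ fun i _ => ?_
  have h1 : ⟪v i, a • x + b • y⟫ + c i
      = a * (⟪v i, x⟫ + c i) + b * (⟪v i, y⟫ + c i) := by
    rw [inner_add_right, real_inner_smul_right, real_inner_smul_right]
    linear_combination (-(c i)) * hab
  rw [h1]
  have h2 : ⟪v i, x⟫ + c i ≤ Finset.univ.sup' Finset.univ_nonempty (fun i => ⟪v i, x⟫ + c i) :=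
    Finset.le_sup' (fun i => ⟪v i, x⟫ + c i) (Finset.mem_univ i)
  have h3 : ⟪v i, y⟫ + c i ≤ Finset.univ.sup' Finset.univ_nonempty (fun i => ⟪v i, y⟫ + c i) :=
    Finset.le_sup' (fun i => ⟪v i, y⟫ + c i) (Finset.mem_univ i)
  simp only [smul_eq_mul]
  nlinarith [mul_le_mul_of_nonneg_left h2 ha, mul_le_mul_of_nonneg_left h3 hb]

lemma lipschitzOf {f : EuclideanSpace ℝ (Fin d) → ℝ} {L : ℝ}
    (hL : ∀ x y, |f x - f y| ≤ L * ‖x - y‖) (hL0 : 0 ≤ L) :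
    LipschitzWith (Real.toNNReal L) f := by
  refine LipschitzWith.of_dist_le_mul fun x y => ?_
  rw [Real.dist_eq, dist_eq_norm, Real.coe_toNNReal _ hL0]
  exact hL x y

lemma prox_exists {f : EuclideanSpace ℝ (Fin d) → ℝ} {L : ℝ}
    (hL : ∀ x y, |f x - f y| ≤ L * ‖x - y‖) (hL0 : 0 ≤ L) (x : EuclideanSpace ℝ (Fin d)) :
    ∃ y, IsProxPt f x y := by
  have hcont : Continuous f := (lipschitzOf hL hL0).continuous
  set g : EuclideanSpace ℝ (Fin d) → ℝ := fun z => f z + ‖x - z‖ ^ 2 / 2 with hgdef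
  have hgc : Continuous g := by
    exact hcont.add ((((continuous_const.sub continuous_id).norm).pow 2).div_const 2)
  obtain ⟨y, hyB, hymin⟩ := (isCompact_closedBall x (2 * L + 1)).exists_isMinOn
    ⟨x, Metric.mem_closedBall_self (by linarith)⟩ hgc.continuousOn
  refine ⟨y, fun z => ?_⟩
  by_cases hz : z ∈ Metric.closedBall x (2 * L + 1)
  · exact hymin hz
  · have hgx : g y ≤ g x := hymin (Metric.mem_closedBall_self (by linarith))
    have hd : 2 * L + 1 < ‖x - z‖ := by
      have := Metric.mem_closedBall.not.1 hz
      rw [dist_eq_norm] at this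
      have h2 : ‖z - x‖ = ‖x - z‖ := norm_sub_rev z x
      push_neg at this; linarith [this]
    have hfz : f x - f z ≤ L * ‖x - z‖ := (abs_le.1 (hL x z)).2
    have : g x ≤ g z := by
      simp only [hgdef, sub_self, norm_zero]
      nlinarith [norm_nonneg (x - z)]
    exact le_trans (le_trans hgx this) (le_refl _)

lemma prox_dist {f : EuclideanSpace ℝ (Fin d) → ℝ} {L : ℝ}
    (hL : ∀ x y, |f x - f y| ≤ L * ‖x - y‖) (hL0 : 0 ≤ L) {x y : EuclideanSpace ℝ (Fin d)}
    (h : IsProxPt f x y) : ‖x - y‖ ≤ 2 * L := by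
  have h1 := h x
  simp only [sub_self, norm_zero] at h1
  have h2 : f x - f y ≤ L * ‖x - y‖ := (abs_le.1 (hL x y)).2
  rcases eq_or_lt_of_le (norm_nonneg (x - y)) with hn | hn
  · linarith [hn.symm]
  · have hsq : ‖x - y‖ * ‖x - y‖ ≤ (2 * L) * ‖x - y‖ := by nlinarith
    exact le_of_mul_le_mul_right hsq hn

lemma prox_subgrad {f : EuclideanSpace ℝ (Fin d) → ℝ}
    (hf : ConvexOn ℝ Set.univ f) {x y : EuclideanSpace ℝ (Fin d)}
    (h : IsProxPt f x y) (z : EuclideanSpace ℝ (Fin d)) :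
    f y + ⟪x - y, z - y⟫ ≤ f z := by
  have key : ∀ t : ℝ, 0 < t → t ≤ 1 →
      -(t * (‖z - y‖ ^ 2 / 2)) ≤ f z - f y - ⟪x - y, z - y⟫ := by
    intro t ht ht1
    have hzt : y + t • (z - y) = (1 - t) • y + t • z := by module
    have hcv : f (y + t • (z - y)) ≤ (1 - t) * f y + t * f z := by
      rw [hzt]
      exact hf.2 (Set.mem_univ y) (Set.mem_univ z) (by linarith) (le_of_lt ht) (by ring)
    have hmin := h (y + t • (z - y))
    have hnorm : ‖x - (y + t • (z - y))‖ ^ 2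
        = ‖x - y‖ ^ 2 - 2 * (t * ⟪x - y, z - y⟫) + t ^ 2 * ‖z - y‖ ^ 2 := by
      have : x - (y + t • (z - y)) = (x - y) - t • (z - y) := by abel
      rw [this, norm_sub_sq_real, real_inner_smul_right, norm_smul]
      rw [Real.norm_eq_abs, mul_pow, sq_abs]
      try ring
    nlinarith [hmin, hcv, hnorm]
  have hlim : Filter.Tendsto (fun t : ℝ => -(t * (‖z - y‖ ^ 2 / 2))) (nhdsWithin 0 (Set.Ioi 0))
      (nhds 0) := by
    have : Filter.Tendsto (fun t : ℝ => -(t * (‖z - y‖ ^ 2 / 2))) (nhds 0) (nhds 0) := by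
      have : Filter.Tendsto (fun t : ℝ => -(t * (‖z - y‖ ^ 2 / 2))) (nhds 0)
          (nhds (-((0:ℝ) * (‖z - y‖ ^ 2 / 2)))) := (Filter.tendsto_id.mul tendsto_const_nhds).neg
      simpa using this
    exact this.mono_left nhdsWithin_le_nhds
  have hev : ∀ᶠ t in nhdsWithin (0:ℝ) (Set.Ioi 0),
      -(t * (‖z - y‖ ^ 2 / 2)) ≤ f z - f y - ⟪x - y, z - y⟫ := by
    filter_upwards [Ioc_mem_nhdsGT_of_mem (Set.mem_Ico.2 ⟨le_refl 0, zero_lt_one⟩)] with t ht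
    exact key t ht.1 ht.2
  have := le_of_tendsto hlim hev
  linarith

lemma prox_firm {f : EuclideanSpace ℝ (Fin d) → ℝ}
    (hf : ConvexOn ℝ Set.univ f) {x x' y y' : EuclideanSpace ℝ (Fin d)}
    (h : IsProxPt f x y) (h' : IsProxPt f x' y') : ‖y - y'‖ ≤ ‖x - x'‖ := by
  have h1 := prox_subgrad hf h y'
  have h2 := prox_subgrad hf h' y
  have hkey : ‖y - y'‖ ^ 2 ≤ ⟪x - x', y - y'⟫ := by
    have e1 : ⟪x - y, y' - y⟫ = -⟪x - y, y - y'⟫ := by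
      rw [← inner_neg_right]; congr 1; abel
    have e2 : ⟪x' - y', y - y'⟫ = ⟪x' - x, y - y'⟫ + ⟪x - y, y - y'⟫ + ⟪y - y', y - y'⟫ := by
      rw [← inner_add_left, ← inner_add_left]; congr 1; abel
    have e3 : ⟪x' - x, y - y'⟫ = -⟪x - x', y - y'⟫ := by
      rw [← inner_neg_left]; congr 1; abel
    have e4 : ⟪y - y', y - y'⟫ = ‖y - y'‖ ^ 2 := real_inner_self_eq_norm_sq (y - y')
    nlinarith [h1, h2]
  nlinarith [real_inner_le_norm (x - x') (y - y'), norm_nonneg (y - y'), norm_nonneg (x - x'),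
    sq_nonneg (‖y - y'‖)]

lemma grad_subgrad {f : EuclideanSpace ℝ (Fin d) → ℝ}
    (hf : ConvexOn ℝ Set.univ f) {y g : EuclideanSpace ℝ (Fin d)}
    (h : HasGradientAt f g y) (z : EuclideanSpace ℝ (Fin d)) :
    f y + ⟪g, z - y⟫ ≤ f z := by
  rcases eq_or_ne z y with rfl | hzy
  · simp
  set γ : ℝ → EuclideanSpace ℝ (Fin d) := fun t => y + t • (z - y) with hγ
  have hγd : HasDerivAt γ (z - y) 0 := by
    have h1 : HasDerivAt (fun t : ℝ => t • (z - y)) ((1:ℝ) • (z - y)) 0 :=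
      (hasDerivAt_id (0:ℝ)).smul_const (z - y)
    have h2 := h1.const_add y
    rw [one_smul] at h2
    exact h2
  have hγ0 : γ 0 = y := by simp [hγ]
  have hcomp : HasDerivAt (f ∘ γ) (⟪g, z - y⟫) 0 := by
    have hfd : HasFDerivAt f (InnerProductSpace.toDual ℝ _ g : _ →L[ℝ] ℝ) y := h.hasFDerivAt
    rw [← hγ0] at hfd
    have := hfd.comp_hasDerivAt 0 hγd
    simpa [InnerProductSpace.toDual_apply_apply] using this
  have hc : ConvexOn ℝ Set.univ (f ∘ γ) := by
    refine ⟨convex_univ, fun s _ t _ a b ha hb hab => ?_⟩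
    have hkey : γ (a * s + b * t) = a • γ s + b • γ t := by
      simp only [hγ]
      have : a • (y + s • (z - y)) + b • (y + t • (z - y))
          = (a + b) • y + (a * s + b * t) • (z - y) := by module
      rw [this, hab, one_smul]
    simp only [Function.comp_apply, smul_eq_mul]
    rw [hkey]
    exact hf.2 (Set.mem_univ _) (Set.mem_univ _) ha hb hab
  have hslope := hc.le_slope_of_hasDerivAt (Set.mem_univ (0:ℝ)) (Set.mem_univ (1:ℝ))
    zero_lt_one hcomp
  rw [slope_def_field] at hslope
  have hγ1 : γ 1 = z := by simp [hγ]
  simp only [Function.comp_apply, hγ0, hγ1] at hslope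
  have : ⟪g, z - y⟫ ≤ f z - f y := by
    have h10 : (1:ℝ) - 0 = 1 := by norm_num
    rw [h10, div_one] at hslope  -- slope f 0 1 = (f 1 - f 0)/(1-0)
    linarith [hslope]
  linarith

lemma grad_prox {f : EuclideanSpace ℝ (Fin d) → ℝ}
    (hf : ConvexOn ℝ Set.univ f) {y g : EuclideanSpace ℝ (Fin d)}
    (h : HasGradientAt f g y) : IsProxPt f (y + g) y := by
  intro z
  have hsub := grad_subgrad hf h z
  have h1 : y + g - y = g := by abel
  have h2 : ‖y + g - z‖ ^ 2 = ‖g‖ ^ 2 - 2 * ⟪g, z - y⟫ + ‖z - y‖ ^ 2 := by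
    have e : y + g - z = g - (z - y) := by abel
    rw [e, norm_sub_sq_real]
  rw [h1]
  nlinarith [norm_nonneg (z - y), sq_nonneg (‖z - y‖)]

lemma lip_image_vol {d : ℕ} {T : EuclideanSpace ℝ (Fin d) → EuclideanSpace ℝ (Fin d)}
    (hT : LipschitzWith 1 T) (E : Set (EuclideanSpace ℝ (Fin d))) :
    volume (T '' E) ≤ volume E := by
  have frk : Module.finrank ℝ (EuclideanSpace ℝ (Fin d)) = d := finrank_euclideanSpace_fin
  haveI hH : (μH[(d:ℝ)] : Measure (EuclideanSpace ℝ (Fin d))).IsAddHaarMeasure := by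
    have := MeasureTheory.isAddHaarMeasure_hausdorffMeasure (E := EuclideanSpace ℝ (Fin d))
    rwa [frk] at this
  have hvol : (volume : Measure (EuclideanSpace ℝ (Fin d)))
      = Measure.addHaarScalarFactor volume (μH[(d:ℝ)] : Measure (EuclideanSpace ℝ (Fin d)))
        • (μH[(d:ℝ)] : Measure (EuclideanSpace ℝ (Fin d))) :=
    Measure.isAddLeftInvariant_eq_smul _ _
  have him : (μH[(d:ℝ)] : Measure (EuclideanSpace ℝ (Fin d))) (T '' E)
      ≤ (μH[(d:ℝ)] : Measure (EuclideanSpace ℝ (Fin d))) E := by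
    have := hT.hausdorffMeasure_image_le (d := (d:ℝ)) (by positivity) E
    simpa using this
  rw [hvol]
  simp only [Measure.smul_apply, smul_eq_mul]
  exact mul_le_mul_right him _

lemma pow_diff_le {a b : ℝ} (hb : 0 ≤ b) (hab : b ≤ a) (n : ℕ) :
    a ^ n - b ^ n ≤ n * (a - b) * a ^ (n - 1) := by
  induction n with
  | zero => simp
  | succ n ih =>
    have ha : 0 ≤ a := le_trans hb hab
    have hpow : b ^ n ≤ a ^ n := pow_le_pow_left₀ hb hab n
    have hst : a ^ (n + 1) - b ^ (n + 1) = a * (a ^ n - b ^ n) + (a - b) * b ^ n := by ring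
    rcases Nat.eq_zero_or_pos n with rfl | hn
    · simp
    · have he : a * (n * (a - b) * a ^ (n - 1)) = n * (a - b) * a ^ n := by
        have : a * a ^ (n - 1) = a ^ n := by
          rw [← pow_succ']
          congr 1
          omega
        rw [← this]; ring
      have h1 : a * (a ^ n - b ^ n) ≤ n * (a - b) * a ^ n := by
        calc a * (a ^ n - b ^ n) ≤ a * (n * (a - b) * a ^ (n - 1)) := by
              apply mul_le_mul_of_nonneg_left ih ha
          _ = n * (a - b) * a ^ n := he
      have h2 : (a - b) * b ^ n ≤ (a - b) * a ^ n :=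
        mul_le_mul_of_nonneg_left hpow (by linarith)
      have hgoal : ((n:ℝ) + 1) * (a - b) * a ^ (n + 1 - 1) = n * (a - b) * a ^ n + (a - b) * a ^ n := by
        simp only [Nat.add_sub_cancel]
        ring
      push_cast
      rw [hst]
      push_cast at hgoal
      rw [hgoal]
      linarith

lemma strip_vol {f : EuclideanSpace ℝ (Fin d) → ℝ} {L R : ℝ}
    (hconv : ConvexOn ℝ Set.univ f) (hL : ∀ x y, |f x - f y| ≤ L * ‖x - y‖) (hL0 : 0 ≤ L) :
    volume (GStrip f ∩ Metric.closedBall 0 R) + volume (Metric.closedBall (0:EuclideanSpace ℝ (Fin d)) R)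
      ≤ volume (Metric.closedBall (0:EuclideanSpace ℝ (Fin d)) (R + 2 * L)) := by
  classical
  set N : Set (EuclideanSpace ℝ (Fin d)) := {y | ¬ DifferentiableAt ℝ f y} with hN
  set T : EuclideanSpace ℝ (Fin d) → EuclideanSpace ℝ (Fin d) := fun x => Classical.choose (prox_exists hL hL0 x) with hTdef
  have hT : ∀ x, IsProxPt f x (T x) := fun x => Classical.choose_spec (prox_exists hL hL0 x)
  have hTuniq : ∀ x y, IsProxPt f x y → y = T x := by
    intro x y hy
    have := prox_firm hconv hy (hT x)
    simp only [sub_self, norm_zero] at this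
    have h0 : ‖y - T x‖ = 0 := le_antisymm this (norm_nonneg _)
    rwa [norm_sub_eq_zero_iff] at h0
  have hTlip : LipschitzWith 1 T := by
    refine LipschitzWith.of_dist_le_mul fun x x' => ?_
    rw [dist_eq_norm, dist_eq_norm, NNReal.coe_one, one_mul]
    exact prox_firm hconv (hT x) (hT x')
  have hGS : GStrip f = T ⁻¹' N := by
    ext x
    constructor
    · intro hx
      exact hx (T x) (hT x)
    · intro hx y hy
      rw [hTuniq x y hy]
      exact hx
  have hNmeas : MeasurableSet N := (measurableSet_of_differentiableAt ℝ f).compl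
  have hN0 : volume N = 0 := by
    have := (lipschitzOf hL hL0).ae_differentiableAt (μ := volume)
    rw [MeasureTheory.ae_iff] at this
    exact this
  set A : Set (EuclideanSpace ℝ (Fin d)) := GStrip f ∩ Metric.closedBall 0 R with hA
  have hAmeas : MeasurableSet A := by
    rw [hA, hGS]
    exact (hTlip.continuous.measurable hNmeas).inter measurableSet_closedBall
  set s : EuclideanSpace ℝ (Fin d) → EuclideanSpace ℝ (Fin d) := fun y => y + gradient f y with hs
  set Y : Set (EuclideanSpace ℝ (Fin d)) := Metric.closedBall (0:EuclideanSpace ℝ (Fin d)) R \ N with hY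
  have hsY : ∀ y ∈ Y, IsProxPt f (s y) y := by
    intro y hy
    have hdiff : DifferentiableAt ℝ f y := not_not.mp hy.2
    exact grad_prox hconv hdiff.hasGradientAt
  have hYvol : volume Y = volume (Metric.closedBall (0:EuclideanSpace ℝ (Fin d)) R) := measure_diff_null hN0
  have hYT : T '' (s '' Y) = Y := by
    ext y
    constructor
    · rintro ⟨x, ⟨y', hy', rfl⟩, rfl⟩
      rwa [← hTuniq (s y') y' (hsY y' hy')]
    · intro hy
      exact ⟨s y, ⟨y, hy, rfl⟩, (hTuniq (s y) y (hsY y hy)).symm⟩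
  have hYle : volume Y ≤ volume (s '' Y) := by
    calc volume Y = volume (T '' (s '' Y)) := by rw [hYT]
      _ ≤ volume (s '' Y) := lip_image_vol hTlip _
  have hdisj : Disjoint (s '' Y) A := by
    rw [Set.disjoint_left]
    rintro x ⟨y, hy, rfl⟩ hxA
    exact (hxA.1 y (hsY y hy)) (not_not.mp hy.2)
  have hsub : s '' Y ∪ A ⊆ Metric.closedBall (0:EuclideanSpace ℝ (Fin d)) (R + 2 * L) := by
    rintro x (⟨y, hy, rfl⟩ | hxA)
    · rw [Metric.mem_closedBall, dist_zero_right]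
      have hd : ‖s y - y‖ ≤ 2 * L := prox_dist hL hL0 (hsY y hy)
      have hyn : ‖y‖ ≤ R := by
        have := hy.1
        rwa [Metric.mem_closedBall, dist_zero_right] at this
      calc ‖s y‖ = ‖y + (s y - y)‖ := by congr 1; abel
        _ ≤ ‖y‖ + ‖s y - y‖ := norm_add_le _ _
        _ ≤ R + 2 * L := add_le_add hyn hd
    · exact Metric.closedBall_subset_closedBall (by linarith) hxA.2
  calc volume A + volume (Metric.closedBall (0:EuclideanSpace ℝ (Fin d)) R)
      = volume A + volume Y := by rw [hYvol]
    _ ≤ volume A + volume (s '' Y) := add_le_add_right hYle _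
    _ = volume (s '' Y ∪ A) := by rw [measure_union hdisj hAmeas, add_comm]
    _ ≤ volume (Metric.closedBall (0:EuclideanSpace ℝ (Fin d)) (R + 2 * L)) := measure_mono hsub

lemma strip_vol_bound {f : EuclideanSpace ℝ (Fin d) → ℝ} {L R : ℝ}
    (hconv : ConvexOn ℝ Set.univ f) (hL : ∀ x y, |f x - f y| ≤ L * ‖x - y‖)
    (hL0 : 0 ≤ L) (hL1 : L ≤ 1) (hR : 0 ≤ R) :
    volume (GStrip f ∩ Metric.closedBall 0 R)
      ≤ ENNReal.ofReal (L * (2 * d * (R + 2) ^ (d - 1)))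
        * volume (Metric.ball (0:EuclideanSpace ℝ (Fin d)) 1) := by
  have frk : Module.finrank ℝ (EuclideanSpace ℝ (Fin d)) = d := finrank_euclideanSpace_fin
  have hball : ∀ r : ℝ, 0 ≤ r → volume (Metric.closedBall (0:EuclideanSpace ℝ (Fin d)) r)
      = ENNReal.ofReal (r ^ d) * volume (Metric.ball (0:EuclideanSpace ℝ (Fin d)) 1) := by
    intro r hr
    rw [Measure.addHaar_closedBall _ _ hr, frk]
  have hreal : (R + 2 * L) ^ d ≤ R ^ d + L * (2 * d * (R + 2) ^ (d - 1)) := by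
    have h1 := pow_diff_le hR (by linarith : R ≤ R + 2 * L) d
    have h2 : (R + 2 * L) ^ (d - 1) ≤ (R + 2) ^ (d - 1) :=
      pow_le_pow_left₀ (by linarith) (by linarith) _
    have h3 : (d:ℝ) * (R + 2 * L - R) * (R + 2 * L) ^ (d - 1)
        ≤ (d:ℝ) * (2 * L) * (R + 2) ^ (d - 1) := by
      have : (R + 2 * L - R) = 2 * L := by ring
      rw [this]
      apply mul_le_mul_of_nonneg_left h2
      positivity
    nlinarith [h1, h3]
  have hC : volume (Metric.closedBall (0:EuclideanSpace ℝ (Fin d)) R) ≠ ⊤ :=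
    (measure_closedBall_lt_top).ne
  rw [← ENNReal.add_le_add_iff_right hC]
  calc volume (GStrip f ∩ Metric.closedBall 0 R)
        + volume (Metric.closedBall (0:EuclideanSpace ℝ (Fin d)) R)
      ≤ volume (Metric.closedBall (0:EuclideanSpace ℝ (Fin d)) (R + 2 * L)) :=
        strip_vol hconv hL hL0
    _ = ENNReal.ofReal ((R + 2*L) ^ d) * volume (Metric.ball (0:EuclideanSpace ℝ (Fin d)) 1) := by
        rw [hball _ (by linarith)]
    _ ≤ ENNReal.ofReal (R ^ d + L * (2 * d * (R + 2) ^ (d - 1)))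
        * volume (Metric.ball (0:EuclideanSpace ℝ (Fin d)) 1) := by
        apply mul_le_mul_left
        exact ENNReal.ofReal_le_ofReal hreal
    _ = ENNReal.ofReal (L * (2 * d * (R + 2) ^ (d - 1)))
          * volume (Metric.ball (0:EuclideanSpace ℝ (Fin d)) 1)
        + volume (Metric.closedBall (0:EuclideanSpace ℝ (Fin d)) R) := by
        rw [hball _ hR, ENNReal.ofReal_add (by positivity) (by positivity), add_mul]
        ring

lemma poly_lip {g : EuclideanSpace ℝ (Fin d) → ℝ} (hg : IsPolyhedral g) :
    ∃ L : ℝ, 0 ≤ L ∧ ∀ x y, |g x - g y| ≤ L * ‖x - y‖ := by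
  obtain ⟨n, v, c, hgs⟩ := hg
  set L : ℝ := Finset.univ.sup' Finset.univ_nonempty (fun i => ‖v i‖) with hLdef
  have hL0 : 0 ≤ L := le_trans (norm_nonneg (v 0))
    (Finset.le_sup' (fun i => ‖v i‖) (Finset.mem_univ 0))
  refine ⟨L, hL0, fun x y => ?_⟩
  have key : ∀ x y : EuclideanSpace ℝ (Fin d), g x - g y ≤ L * ‖x - y‖ := by
    intro x y
    rw [hgs, hgs, sub_le_iff_le_add]
    refine Finset.sup'_le _ _ fun i _ => ?_
    have h1 : ⟪v i, x⟫ - ⟪v i, y⟫ = ⟪v i, x - y⟫ := (inner_sub_right _ _ _).symm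
    have h2 : ⟪v i, x - y⟫ ≤ ‖v i‖ * ‖x - y‖ := real_inner_le_norm _ _
    have h3 : ‖v i‖ * ‖x - y‖ ≤ L * ‖x - y‖ :=
      mul_le_mul_of_nonneg_right (Finset.le_sup' (fun i => ‖v i‖) (Finset.mem_univ i))
        (norm_nonneg _)
    have h4 : ⟪v i, y⟫ + c i ≤ Finset.univ.sup' Finset.univ_nonempty (fun i => ⟪v i, y⟫ + c i) :=
      Finset.le_sup' (fun i => ⟪v i, y⟫ + c i) (Finset.mem_univ i)
    linarith
  rw [abs_sub_le_iff]
  constructor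
  · exact key x y
  · have := key y x
    rwa [norm_sub_rev] at this

/-- Every `γ`-null set is Lebesgue null. -/
theorem gamma_null_is_lebesgue_null (d : ℕ) (A : Set (EuclideanSpace ℝ (Fin d)))
    (h : gamma A = 0) : volume A = 0 := by
  classical
  -- reduce to balls
  suffices hloc : ∀ n : ℕ, volume (A ∩ Metric.closedBall 0 (n : ℝ)) = 0 by
    have hcover : A ⊆ ⋃ n : ℕ, A ∩ Metric.closedBall 0 (n : ℝ) := by
      intro x hx
      obtain ⟨n, hn⟩ := exists_nat_ge ‖x‖
      exact Set.mem_iUnion.2 ⟨n, hx, by rwa [Metric.mem_closedBall, dist_zero_right]⟩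
    refine le_antisymm ?_ zero_le
    calc volume A ≤ volume (⋃ n : ℕ, A ∩ Metric.closedBall 0 (n : ℝ)) := measure_mono hcover
      _ ≤ ∑' n : ℕ, volume (A ∩ Metric.closedBall 0 (n : ℝ)) := measure_iUnion_le _
      _ = 0 := by simp [hloc]
  intro n
  set R : ℝ := (n : ℝ) with hRdef
  have hR : 0 ≤ R := Nat.cast_nonneg n
  set C0 : ℝ := 2 * d * (R + 2) ^ (d - 1) with hC0def
  have hC00 : 0 ≤ C0 := by positivity
  set B : ℝ≥0∞ := volume (Metric.ball (0:EuclideanSpace ℝ (Fin d)) 1) with hBdef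
  have hBfin : B ≠ ⊤ := measure_ball_lt_top.ne
  set K : ℝ≥0∞ := ENNReal.ofReal C0 * 3 * B with hKdef
  have hKfin : K ≠ ⊤ := by
    refine ENNReal.mul_ne_top (ENNReal.mul_ne_top ENNReal.ofReal_ne_top (by norm_num)) hBfin
  -- main estimate
  have key : ∀ ε : ℝ, 0 < ε → ε ≤ 1 →
      volume (A ∩ Metric.closedBall 0 R) ≤ ENNReal.ofReal ε * K := by
    intro ε hε hε1
    have hlt : gamma A < ENNReal.ofReal ε := by
      rw [h]; exact ENNReal.ofReal_pos.2 hε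
    rw [gamma, sInf_lt_iff] at hlt
    obtain ⟨t, ⟨S, hSgen, hScov, rfl⟩, htlt⟩ := hlt
    -- choose good functions for each strip
    have hchoice : ∀ i : ℕ, ∃ (L : ℝ) (f : EuclideanSpace ℝ (Fin d) → ℝ),
        0 ≤ L ∧ IsPolyhedral f ∧ (∀ x y, |f x - f y| ≤ L * ‖x - y‖) ∧ GStrip f = S i ∧
        L ≤ stripWidth (S i) / 2 + ε * (1/2) ^ (i + 1) := by
      intro i
      set M : Set ℝ := {L : ℝ | 0 ≤ L ∧ ∃ f, IsPolyhedral f ∧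
          (∀ x y, |f x - f y| ≤ L * ‖x - y‖) ∧ GStrip f = S i} with hMdef
      have hMne : M.Nonempty := by
        obtain ⟨f, hfpoly, hfGS⟩ := hSgen i
        obtain ⟨L, hL0, hLlip⟩ := poly_lip hfpoly
        exact ⟨L, hL0, f, hfpoly, hLlip, hfGS⟩
      obtain ⟨L, hLM, hLlt⟩ := Real.lt_sInf_add_pos hMne
        (show (0:ℝ) < ε * (1/2) ^ (i + 1) by positivity)
      obtain ⟨hL0, f, hfpoly, hflip, hfGS⟩ := hLM
      refine ⟨L, f, hL0, hfpoly, hflip, hfGS, ?_⟩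
      have : stripWidth (S i) / 2 = sInf M := by
        rw [stripWidth]; ring
      rw [this]
      linarith
    choose L F hL0 hFpoly hFlip hFGS hLle using hchoice
    -- each width is at most ε
    have hwidth : ∀ i, ENNReal.ofReal (stripWidth (S i)) ≤ ∑' j, ENNReal.ofReal (stripWidth (S j)) :=
      fun i => ENNReal.le_tsum i
    have hwlt : ∀ i, stripWidth (S i) < ε := by
      intro i
      have h1 : ENNReal.ofReal (stripWidth (S i)) < ENNReal.ofReal ε :=
        lt_of_le_of_lt (hwidth i) htlt
      exact (ENNReal.ofReal_lt_ofReal_iff hε).1 h1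
    have hw0 : ∀ i, 0 ≤ stripWidth (S i) / 2 := by
      intro i
      rw [stripWidth]
      have : 0 ≤ sInf {L : ℝ | 0 ≤ L ∧ ∃ f, IsPolyhedral f ∧
          (∀ x y, |f x - f y| ≤ L * ‖x - y‖) ∧ GStrip f = S i} :=
        Real.sInf_nonneg (fun x hx => hx.1)
      linarith
    have hL1 : ∀ i, L i ≤ 1 := by
      intro i
      have h1 := hLle i
      have h2 := hwlt i
      have h3 : (1/2:ℝ) ^ (i + 1) ≤ 1/2 := by
        calc (1/2:ℝ) ^ (i + 1) ≤ (1/2) ^ 1 :=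
          pow_le_pow_of_le_one (by norm_num) (by norm_num) (by omega)
        _ = 1/2 := pow_one _
      nlinarith [hw0 i]
    -- volume bound
    have hvol : ∀ i, volume (S i ∩ Metric.closedBall 0 R)
        ≤ (ENNReal.ofReal (stripWidth (S i)) * ENNReal.ofReal (C0 / 2)
            + ENNReal.ofReal (ε * C0 / 2) * ENNReal.ofReal (1/2) ^ i) * B := by
      intro i
      have h1 : volume (S i ∩ Metric.closedBall 0 R)
          ≤ ENNReal.ofReal (L i * C0) * B := by
        rw [← hFGS i]
        exact strip_vol_bound (poly_convexOn (hFpoly i)) (hFlip i) (hL0 i) (hL1 i) hR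
      refine le_trans h1 ?_
      apply mul_le_mul_left
      have h2 : L i * C0 ≤ (stripWidth (S i) / 2) * C0 + (ε * (1/2) ^ (i + 1)) * C0 := by
        have := hLle i
        nlinarith [hC00]
      calc ENNReal.ofReal (L i * C0)
          ≤ ENNReal.ofReal ((stripWidth (S i) / 2) * C0 + (ε * (1/2) ^ (i + 1)) * C0) :=
            ENNReal.ofReal_le_ofReal h2
        _ = ENNReal.ofReal ((stripWidth (S i) / 2) * C0)
            + ENNReal.ofReal ((ε * (1/2) ^ (i + 1)) * C0) := by
            rw [ENNReal.ofReal_add (mul_nonneg (hw0 i) hC00) (by positivity)]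
        _ = ENNReal.ofReal (stripWidth (S i)) * ENNReal.ofReal (C0 / 2)
            + ENNReal.ofReal (ε * C0 / 2) * ENNReal.ofReal (1/2) ^ i := by
            congr 1
            · rw [← ENNReal.ofReal_mul (by linarith [hw0 i])]
              congr 1
              ring
            · rw [← ENNReal.ofReal_pow (by norm_num), ← ENNReal.ofReal_mul (by positivity)]
              congr 1
              ring
    -- sum up
    have hsum : volume (A ∩ Metric.closedBall 0 R)
        ≤ ∑' i, volume (S i ∩ Metric.closedBall 0 R) := by
      have hsub : A ∩ Metric.closedBall 0 R ⊆ ⋃ i, (S i ∩ Metric.closedBall 0 R) := by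
        intro x hx
        obtain ⟨i, hi⟩ := Set.mem_iUnion.1 (hScov hx.1)
        exact Set.mem_iUnion.2 ⟨i, hi, hx.2⟩
      exact le_trans (measure_mono hsub) (measure_iUnion_le _)
    have hgeom : ∑' i : ℕ, ENNReal.ofReal (1/2) ^ i = 2 := by
      rw [ENNReal.tsum_geometric]
      have : (1:ℝ≥0∞) - ENNReal.ofReal (1/2) = ENNReal.ofReal (1/2) := by
        rw [← ENNReal.ofReal_one, ← ENNReal.ofReal_sub _ (by norm_num)]
        norm_num
      rw [this]
      rw [show ENNReal.ofReal (1/2) = 2⁻¹ by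
        rw [ENNReal.ofReal_div_of_pos (by norm_num)]
        norm_num]
      simp
    calc volume (A ∩ Metric.closedBall 0 R)
        ≤ ∑' i, volume (S i ∩ Metric.closedBall 0 R) := hsum
      _ ≤ ∑' i, (ENNReal.ofReal (stripWidth (S i)) * ENNReal.ofReal (C0 / 2)
            + ENNReal.ofReal (ε * C0 / 2) * ENNReal.ofReal (1/2) ^ i) * B :=
          ENNReal.tsum_le_tsum fun i => hvol i
      _ = (∑' i, ENNReal.ofReal (stripWidth (S i))) * (ENNReal.ofReal (C0 / 2) * B)
            + ENNReal.ofReal (ε * C0 / 2) * ((∑' i : ℕ, ENNReal.ofReal (1/2) ^ i) * B) := by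
          simp only [add_mul, mul_assoc]
          rw [ENNReal.tsum_add, ENNReal.tsum_mul_right, ENNReal.tsum_mul_left,
            ENNReal.tsum_mul_right]
      _ = (∑' i, ENNReal.ofReal (stripWidth (S i))) * (ENNReal.ofReal (C0 / 2) * B)
            + (ENNReal.ofReal ε * ENNReal.ofReal (C0 / 2)) * (2 * B) := by
          rw [hgeom]
          congr 1
          rw [← ENNReal.ofReal_mul hε.le]
          congr 2
          ring
      _ ≤ ENNReal.ofReal ε * (ENNReal.ofReal (C0 / 2) * B)
            + (ENNReal.ofReal ε * ENNReal.ofReal (C0 / 2)) * (2 * B) :=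
          add_le_add_left (mul_le_mul_left htlt.le _) _
      _ = ENNReal.ofReal ε * (ENNReal.ofReal (C0 / 2) * 3 * B) := by ring
      _ ≤ ENNReal.ofReal ε * K := by
          apply mul_le_mul_right
          rw [hKdef]
          apply mul_le_mul_left
          apply mul_le_mul_left
          exact ENNReal.ofReal_le_ofReal (by linarith)
  -- conclude via ε → 0
  have hlim : Filter.Tendsto (fun k : ℕ => ENNReal.ofReal ((1/2:ℝ) ^ k) * K)
      Filter.atTop (nhds 0) := by
    have h1 : Filter.Tendsto (fun k : ℕ => ENNReal.ofReal (1/2:ℝ) ^ k)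
        Filter.atTop (nhds 0) :=
      ENNReal.tendsto_pow_atTop_nhds_zero_of_lt_one
        (by rw [ENNReal.ofReal_lt_one]; norm_num)
    have h2 := ENNReal.Tendsto.mul_const h1 (Or.inr hKfin)
    rw [zero_mul] at h2
    convert h2 using 2 with k
    rw [ENNReal.ofReal_pow (by norm_num)]
  refine le_antisymm ?_ zero_le
  refine ge_of_tendsto hlim ?_
  filter_upwards with k
  exact key ((1/2:ℝ) ^ k) (by positivity) (pow_le_one₀ (by norm_num) (by norm_num))
end

section
/- For every set A ⊆ ℝ^d (d ≥ 1), γ(A) ≤ 2·λ*({|x| : x ∈ A}), where λ* is the one-dimensional Lebesgue outer measure of the set of norms of points of A, and γ is the generalized-strip outer measure. -/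
open Set MeasureTheory ENNReal RealInnerProductSpace

variable {d : ℕ}

section AuxLemmas
open Filter

lemma deriv_ge_of_slope {φ : ℝ → ℝ} {D c : ℝ} (h : HasDerivAt φ D 0)
    (hs : ∀ t : ℝ, 0 < t → φ 0 + c * t ≤ φ t) : c ≤ D := by
  have ht := hasDerivAt_iff_tendsto_slope.mp h
  have h2 : Tendsto (slope φ 0) (nhdsWithin 0 (Ioi 0)) (nhds D) :=
    ht.mono_left (nhdsWithin_mono _ (fun t ht' => ne_of_gt ht'))
  refine ge_of_tendsto h2 ?_
  filter_upwards [self_mem_nhdsWithin] with t ht'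
  have ht0 : (0:ℝ) < t := ht'
  have : c ≤ (φ t - φ 0) / t := (le_div_iff₀ ht0).mpr (by have := hs t ht0; linarith)
  simpa [slope_def_field, sub_zero] using this

variable {E' : Type*} [NormedAddCommGroup E'] [InnerProductSpace ℝ E']

lemma line_hasDerivAt (y v : E') (f : E' → ℝ) (hf : DifferentiableAt ℝ f y) :
    HasDerivAt (fun t : ℝ => f (y + t • v)) (fderiv ℝ f y v) 0 := by
  have hline : HasDerivAt (fun t : ℝ => y + t • v) v 0 := by
    simpa using ((hasDerivAt_id (0:ℝ)).smul_const v).const_add y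
  have hf2 : HasFDerivAt f (fderiv ℝ f y) (y + (0:ℝ) • v) := by simpa using hf.hasFDerivAt
  have := hf2.comp_hasDerivAt 0 hline
  exact this

lemma quad_hasDerivAt (p v : E') :
    HasDerivAt (fun t : ℝ => ‖p - t • v‖ ^ 2 / 2) (-⟪p, v⟫) 0 := by
  have heq : ∀ t : ℝ, ‖p - t • v‖ ^ 2 / 2
      = (‖p‖^2 - 2 * (⟪p,v⟫ * t) + (‖v‖^2 * t^2)) / 2 := by
    intro t
    rw [@norm_sub_sq_real E']
    rw [real_inner_smul_right, norm_smul]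
    simp [mul_pow]
    ring
  simp only [heq]
  have h1 : HasDerivAt (fun t : ℝ => ‖p‖^2 - 2 * (⟪p,v⟫ * t) + (‖v‖^2 * t^2)) (-2*⟪p,v⟫) 0 := by
    have ha : HasDerivAt (fun t : ℝ => ⟪p,v⟫ * t) ⟪p,v⟫ 0 := by
      simpa using (hasDerivAt_id (0:ℝ)).const_mul ⟪p,v⟫
    have hb : HasDerivAt (fun t : ℝ => ‖v‖^2 * t^2) 0 0 := by
      have := ((hasDerivAt_pow 2 (0:ℝ))).const_mul (‖v‖^2)
      simpa using this
    have h := ((ha.const_mul 2).const_sub (‖p‖^2)).add hb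
    have e2 : -2*⟪p,v⟫ = -(2*⟪p,v⟫) + 0 := by ring
    rw [e2]; exact h
  have := h1.div_const 2
  have e : -⟪p, v⟫ = -2*⟪p,v⟫/2 := by ring
  rw [e]; exact this

lemma prox_fderiv_eq {f : E' → ℝ} {x y : E'}
    (hp : ∀ z, f y + ‖x - y‖ ^ 2 / 2 ≤ f z + ‖x - z‖ ^ 2 / 2)
    (hf : DifferentiableAt ℝ f y) (v : E') :
    fderiv ℝ f y v = ⟪x - y, v⟫ := by
  set p := x - y with hp'
  have hψ : HasDerivAt (fun t : ℝ => f (y + t • v) + ‖p - t • v‖ ^ 2 / 2)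
      (fderiv ℝ f y v + -⟪p, v⟫) 0 := (line_hasDerivAt y v f hf).add (quad_hasDerivAt p v)
  have hmin : IsLocalMin (fun t : ℝ => f (y + t • v) + ‖p - t • v‖ ^ 2 / 2) 0 := by
    apply Filter.Eventually.of_forall
    intro t
    have h1 := hp (y + t • v)
    have h2 : x - (y + t • v) = p - t • v := by rw [hp']; abel
    simpa [h2] using h1
  have h0 := hmin.hasDerivAt_eq_zero hψ
  linarith [h0]

end AuxLemmas

section AnnStrips
variable {m : ℕ}

noncomputable def gmax (u : Fin (m+1) → EuclideanSpace ℝ (Fin d))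
    (x : EuclideanSpace ℝ (Fin d)) : ℝ :=
  Finset.univ.sup' Finset.univ_nonempty (fun i => ⟪u i, x⟫)

noncomputable def annV (u : Fin (m+1) → EuclideanSpace ℝ (Fin d)) (L : ℝ) :
    Fin (m+1+1) → EuclideanSpace ℝ (Fin d) :=
  Fin.cons 0 (fun j => L • u j)

noncomputable def annC (m : ℕ) (L a' : ℝ) : Fin (m+1+1) → ℝ :=
  Fin.cons 0 (fun _ => -(L*a'))

noncomputable def annF (u : Fin (m+1) → EuclideanSpace ℝ (Fin d)) (L a' : ℝ)
    (x : EuclideanSpace ℝ (Fin d)) : ℝ :=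
  Finset.univ.sup' Finset.univ_nonempty (fun i => ⟪annV u L i, x⟫ + annC m L a' i)

lemma annF_polyhedral (u : Fin (m+1) → EuclideanSpace ℝ (Fin d)) (L a' : ℝ) :
    IsPolyhedral (annF u L a') :=
  ⟨m + 1, annV u L, annC m L a', fun _ => rfl⟩

@[simp] lemma annV_zero (u : Fin (m+1) → EuclideanSpace ℝ (Fin d)) (L : ℝ) :
    annV u L 0 = 0 := rfl
@[simp] lemma annV_succ (u : Fin (m+1) → EuclideanSpace ℝ (Fin d)) (L : ℝ) (j : Fin (m+1)) :
    annV u L j.succ = L • u j := by simp [annV]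
@[simp] lemma annC_zero (L a' : ℝ) : annC m L a' 0 = 0 := rfl
@[simp] lemma annC_succ (L a' : ℝ) (j : Fin (m+1)) : annC m L a' j.succ = -(L*a') := by
  simp [annC]

lemma annF_nonneg (u : Fin (m+1) → EuclideanSpace ℝ (Fin d)) (L a' : ℝ)
    (x : EuclideanSpace ℝ (Fin d)) : 0 ≤ annF u L a' x := by
  have := Finset.le_sup' (fun i => ⟪annV u L i, x⟫ + annC m L a' i)
      (Finset.mem_univ (0 : Fin (m+1+1)))
  simp only [annV_zero, annC_zero, inner_zero_left, add_zero] at this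
  exact this

lemma annF_ge (u : Fin (m+1) → EuclideanSpace ℝ (Fin d)) (L a' : ℝ)
    (x : EuclideanSpace ℝ (Fin d)) (i : Fin (m+1)) :
    L * (⟪u i, x⟫ - a') ≤ annF u L a' x := by
  have := Finset.le_sup' (fun i => ⟪annV u L i, x⟫ + annC m L a' i)
      (Finset.mem_univ i.succ)
  simp only [annV_succ, annC_succ, real_inner_smul_left] at this
  calc L * (⟪u i, x⟫ - a') = L * ⟪u i, x⟫ + -(L * a') := by ring
  _ ≤ _ := this

lemma annF_le (u : Fin (m+1) → EuclideanSpace ℝ (Fin d)) {L : ℝ} (hL : 0 ≤ L) (a' : ℝ)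
    (x : EuclideanSpace ℝ (Fin d)) :
    annF u L a' x ≤ max 0 (L * (gmax u x - a')) := by
  rw [annF]
  apply Finset.sup'_le
  intro i _
  refine Fin.cases ?_ ?_ i
  · simp
  · intro j
    simp only [annV_succ, annC_succ, real_inner_smul_left]
    have h1 : ⟪u j, x⟫ ≤ gmax u x :=
      Finset.le_sup' (fun i => ⟪u i, x⟫) (Finset.mem_univ j)
    have h2 : L * ⟪u j, x⟫ + -(L*a') = L * (⟪u j, x⟫ - a') := by ring
    rw [h2]
    exact le_max_of_le_right (by nlinarith)

lemma annF_lip (u : Fin (m+1) → EuclideanSpace ℝ (Fin d)) {L : ℝ} (hL : 0 ≤ L) (a' : ℝ)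
    (hu : ∀ i, ‖u i‖ = 1) (x y : EuclideanSpace ℝ (Fin d)) :
    |annF u L a' x - annF u L a' y| ≤ L * ‖x - y‖ := by
  have key : ∀ x y : EuclideanSpace ℝ (Fin d),
      annF u L a' x ≤ annF u L a' y + L * ‖x - y‖ := by
    intro x y
    rw [annF]
    apply Finset.sup'_le
    intro i _
    refine Fin.cases ?_ ?_ i
    · simp only [annV_zero, annC_zero, inner_zero_left, add_zero]
      have h1 := annF_nonneg u L a' y
      have h2 : 0 ≤ L * ‖x - y‖ := by positivity
      linarith
    · intro j
      simp only [annV_succ, annC_succ]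
      have h1 : ⟪L • u j, y⟫ + -(L*a') ≤ annF u L a' y := by
        have := Finset.le_sup' (fun i => ⟪annV u L i, y⟫ + annC m L a' i)
            (Finset.mem_univ j.succ)
        simp only [annV_succ, annC_succ] at this
        exact this
      have h2 : ⟪L • u j, x⟫ - ⟪L • u j, y⟫ = ⟪L • u j, x - y⟫ := by
        rw [inner_sub_right]
      have h3 : ⟪L • u j, x - y⟫ ≤ L * ‖x - y‖ := by
        have := real_inner_le_norm (L • u j) (x - y)
        have hn : ‖L • u j‖ = L := by rw [norm_smul, hu j]; simp [abs_of_nonneg hL]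
        rw [hn] at this
        exact this
      linarith
  have h1 := key x y
  have h2 := key y x
  rw [abs_sub_le_iff]
  constructor <;> [skip; rw [norm_sub_rev]] <;> linarith

lemma annulus_subset_gstrip (u : Fin (m+1) → EuclideanSpace ℝ (Fin d))
    (hu : ∀ i, ‖u i‖ = 1) {L : ℝ} (hL : 0 < L) (a' : ℝ) {x : EuclideanSpace ℝ (Fin d)}
    (hx1 : a' ≤ gmax u x) (hx2 : gmax u x ≤ a' + L) :
    x ∈ GStrip (annF u L a') := by
  intro y hyprox hdiff
  set f := annF u L a' with hf
  have hDv : ∀ v, fderiv ℝ f y v = ⟪x - y, v⟫ := fun v => prox_fderiv_eq hyprox hdiff v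
  have slope_ge : ∀ (v : EuclideanSpace ℝ (Fin d)) (c : ℝ),
      (∀ t : ℝ, 0 < t → f y + c * t ≤ f (y + t • v)) → c ≤ ⟪x - y, v⟫ := by
    intro v c hc
    have h := line_hasDerivAt y v f hdiff
    have := deriv_ge_of_slope h (by intro t ht; simpa using hc t ht)
    rwa [hDv v] at this
  obtain ⟨j, -, hj⟩ := Finset.exists_mem_eq_sup' (Finset.univ_nonempty) (fun i => ⟪u i, y⟫)
  have hj : gmax u y = ⟪u j, y⟫ := hj
  have hinner_line : ∀ t : ℝ, ⟪u j, y + t • u j⟫ = ⟪u j, y⟫ + t := by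
    intro t
    rw [inner_add_right, real_inner_smul_right, real_inner_self_eq_norm_sq, hu j]
    ring
  by_cases hcase : gmax u y ≤ a'
  · have hfy : f y = 0 := by
      have h1 := annF_le u hL.le a' y
      rw [max_eq_left (by nlinarith)] at h1
      exact le_antisymm h1 (annF_nonneg u L a' y)
    have hub : ∀ v, 0 ≤ ⟪x - y, v⟫ := by
      intro v
      refine slope_ge v 0 (fun t ht => ?_)
      have := annF_nonneg u L a' (y + t • v)
      rw [hfy]
      simpa using this
    have hp0 : x - y = 0 := by
      have h1 := hub (-(x - y))
      rw [inner_neg_right] at h1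
      exact real_inner_self_nonpos.mp (by linarith)
    have hxy : x = y := sub_eq_zero.mp hp0
    have hga : gmax u y = a' := le_antisymm hcase (hxy ▸ hx1)
    have hLle : L ≤ ⟪x - y, u j⟫ := by
      refine slope_ge (u j) L (fun t ht => ?_)
      have h1 := annF_ge u L a' (y + t • u j) j
      rw [hinner_line t] at h1
      have h2 : L * (⟪u j, y⟫ + t - a') = L * (gmax u y - a') + L * t := by rw [hj]; ring
      rw [h2, hga] at h1
      rw [hfy]
      simpa using h1
    rw [hp0, inner_zero_left] at hLle
    linarith
  · push_neg at hcase
    have hfy : f y = L * (gmax u y - a') := by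
      have h1 := annF_le u hL.le a' y
      rw [max_eq_right (by nlinarith)] at h1
      refine le_antisymm h1 ?_
      have := annF_ge u L a' y j
      rwa [← hj] at this
    have h1 : L ≤ ⟪x - y, u j⟫ := by
      refine slope_ge (u j) L (fun t ht => ?_)
      have h2 := annF_ge u L a' (y + t • u j) j
      rw [hinner_line t] at h2
      have h3 : L * (⟪u j, y⟫ + t - a') = L * (gmax u y - a') + L * t := by rw [hj]; ring
      rw [h3, ← hfy] at h2
      exact h2
    have h2 : ‖x - y‖ ≤ L := by
      rcases eq_or_ne (x - y) 0 with h | h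
      · rw [h]; simpa using hL.le
      · have h4 : -(L * ‖x - y‖) ≤ ⟪x - y, -(x - y)⟫ := by
          refine slope_ge (-(x - y)) (-(L * ‖x - y‖)) (fun t ht => ?_)
          have hlip := annF_lip u hL.le a' hu (y + t • -(x - y)) y
          have h5 : (y + t • -(x - y)) - y = t • -(x - y) := by abel
          rw [h5] at hlip
          have h6 : ‖t • -(x - y)‖ = t * ‖x - y‖ := by
            rw [norm_smul, norm_neg, Real.norm_eq_abs, abs_of_pos ht]
          rw [h6] at hlip
          have h7 := (abs_le.mp hlip).1
          nlinarith
        rw [inner_neg_right, real_inner_self_eq_norm_sq] at h4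
        have hpos : 0 < ‖x - y‖ := norm_pos_iff.mpr h
        nlinarith
    have h3 : x - y = L • u j := by
      have hnorm : ‖(x - y) - L • u j‖ ^ 2 ≤ 0 := by
        rw [@norm_sub_sq_real]
        rw [real_inner_smul_right, norm_smul, hu j]
        have h5 : ‖x - y‖ ^ 2 ≤ L ^ 2 := by nlinarith [norm_nonneg (x - y)]
        simp only [Real.norm_eq_abs, abs_of_pos hL, mul_one]
        nlinarith
      have h6 : ‖(x - y) - L • u j‖ = 0 := by
        nlinarith [norm_nonneg ((x - y) - L • u j)]
      rw [norm_eq_zero, sub_eq_zero] at h6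
      exact h6
    have h4 : ⟪u j, x⟫ = gmax u y + L := by
      have hx' : x = y + (x - y) := by abel
      rw [hx', h3, inner_add_right, real_inner_smul_right, real_inner_self_eq_norm_sq, hu j, hj]
      ring
    have h5 : ⟪u j, x⟫ ≤ gmax u x := Finset.le_sup' (fun i => ⟪u i, x⟫) (Finset.mem_univ j)
    linarith

end AnnStrips

lemma exists_net (hd : 1 ≤ d) {η : ℝ} (hη : 0 < η) :
    ∃ (m : ℕ) (u : Fin (m+1) → EuclideanSpace ℝ (Fin d)),
      (∀ i, ‖u i‖ = 1) ∧
      ∀ x : EuclideanSpace ℝ (Fin d), ∃ i, (1 - η) * ‖x‖ ≤ ⟪u i, x⟫ := by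
  classical
  set S : Set (EuclideanSpace ℝ (Fin d)) := Metric.sphere 0 1 with hS
  have hcompact : IsCompact S := isCompact_sphere 0 1
  set V : S → Set (EuclideanSpace ℝ (Fin d)) :=
    fun w => {z | 1 - η < ⟪(w : EuclideanSpace ℝ (Fin d)), z⟫} with hV
  have hopen : ∀ w : S, IsOpen (V w) := by
    intro w
    exact isOpen_lt continuous_const (Continuous.inner continuous_const continuous_id)
  have hcover : S ⊆ ⋃ w : S, V w := by
    intro y hy
    refine mem_iUnion.mpr ⟨⟨y, hy⟩, ?_⟩
    have : ‖y‖ = 1 := mem_sphere_zero_iff_norm.mp hy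
    simp only [hV, mem_setOf_eq, real_inner_self_eq_norm_sq, this]
    nlinarith
  obtain ⟨t, ht⟩ := hcompact.elim_finite_subcover V hopen hcover
  have hSne : S.Nonempty := by
    refine ⟨EuclideanSpace.single (⟨0, hd⟩ : Fin d) 1, ?_⟩
    rw [hS, mem_sphere_zero_iff_norm, EuclideanSpace.norm_single]
    norm_num
  have htne : t.Nonempty := by
    obtain ⟨y, hy⟩ := hSne
    obtain ⟨w, hw, -⟩ := mem_iUnion₂.mp (ht hy)
    exact ⟨w, hw⟩
  have hcard : t.card - 1 + 1 = t.card := Nat.succ_pred_eq_of_pos (Finset.card_pos.mpr htne)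
  refine ⟨t.card - 1, fun i => (t.equivFin.symm (Fin.cast hcard i) : S), ?_, ?_⟩
  · intro i
    exact mem_sphere_zero_iff_norm.mp (t.equivFin.symm (Fin.cast hcard i)).1.2
  · intro x
    rcases eq_or_ne x 0 with rfl | hx
    · exact ⟨0, by simp⟩
    · have hxpos : 0 < ‖x‖ := norm_pos_iff.mpr hx
      have hyS : (‖x‖⁻¹ • x) ∈ S := by
        simp [hS, mem_sphere_zero_iff_norm, norm_smul, abs_of_pos (inv_pos.mpr hxpos),
          inv_mul_cancel₀ (ne_of_gt hxpos)]
      obtain ⟨w, hwt, hwmem⟩ := mem_iUnion₂.mp (ht hyS)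
      have hw2 : 1 - η < ⟪(w : EuclideanSpace ℝ (Fin d)), ‖x‖⁻¹ • x⟫ := hwmem
      rw [real_inner_smul_right] at hw2
      refine ⟨Fin.cast hcard.symm (t.equivFin ⟨w, hwt⟩), ?_⟩
      show (1 - η) * ‖x‖ ≤
        ⟪((t.equivFin.symm (Fin.cast hcard (Fin.cast hcard.symm (t.equivFin ⟨w, hwt⟩)))) :
          EuclideanSpace ℝ (Fin d)), x⟫
      have hco : t.equivFin.symm (Fin.cast hcard (Fin.cast hcard.symm (t.equivFin ⟨w, hwt⟩)))
          = ⟨w, hwt⟩ := by simp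
      rw [hco]
      calc (1 - η) * ‖x‖ ≤ (‖x‖⁻¹ * ⟪(w : EuclideanSpace ℝ (Fin d)), x⟫) * ‖x‖ := by
            nlinarith
      _ = ⟪(w : EuclideanSpace ℝ (Fin d)), x⟫ := by field_simp

lemma cover_by_Ioc (N : Set ℝ) (hfin : volume N ≠ ⊤) {ε : ℝ≥0∞} (hε : ε ≠ 0) :
    ∃ (a b : ℕ → ℝ), N ⊆ (⋃ n, Ioc (a n) (b n)) ∧
      ∑' n, ENNReal.ofReal (b n - a n) ≤ volume N + ε := by
  obtain ⟨ε2, hε2⟩ : ∃ ε2 : ℝ≥0∞, ε2 = ε / 2 := ⟨_, rfl⟩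
  have hε2pos : ε2 ≠ 0 := by
    rw [hε2]; exact (ENNReal.div_pos hε (by norm_num)).ne'
  have hvol : volume N = StieltjesFunction.id.outer N := by
    rw [Real.volume_eq_stieltjes_id, StieltjesFunction.measure_def]
    rfl
  have hlt : StieltjesFunction.id.outer N < volume N + ε2 := by
    rw [← hvol]
    exact ENNReal.lt_add_right hfin hε2pos
  rw [StieltjesFunction.outer, OuterMeasure.ofFunction_apply] at hlt
  obtain ⟨t, htc⟩ := iInf_lt_iff.mp hlt
  obtain ⟨htcover, htsum⟩ := iInf_lt_iff.mp htc
  obtain ⟨δ, hδpos, hδsum⟩ := ENNReal.exists_pos_sum_of_countable hε2pos ℕ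
  have hlen : ∀ n, StieltjesFunction.id.length (t n)
      < StieltjesFunction.id.length (t n) + δ n := by
    intro n
    apply ENNReal.lt_add_right _ (by simpa using (hδpos n).ne')
    intro htop
    have : (⊤:ℝ≥0∞) ≤ ∑' n, StieltjesFunction.id.length (t n) := by
      rw [← htop]; exact ENNReal.le_tsum n
    rw [top_le_iff] at this
    rw [this] at htsum
    exact (htsum.trans_le le_top).false
  have hchoice : ∀ n, ∃ p : ℝ × ℝ, t n ⊆ Ioc p.1 p.2 ∧
      ENNReal.ofReal (p.2 - p.1) ≤ StieltjesFunction.id.length (t n) + δ n := by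
    intro n
    have h1 := hlen n
    conv_lhs at h1 => rw [StieltjesFunction.length_eq]
    rw [iInf_lt_iff] at h1
    obtain ⟨a, ha⟩ := h1
    rw [iInf_lt_iff] at ha
    obtain ⟨b, hb⟩ := ha
    rw [iInf_lt_iff] at hb
    obtain ⟨hsub, hlt'⟩ := hb
    exact ⟨(a, b), fun x hx => hsub ⟨hx, fun hb => not_isBot x hb⟩, by simpa using hlt'.le⟩
  choose p hp1 hp2 using hchoice
  refine ⟨fun n => (p n).1, fun n => (p n).2, ?_, ?_⟩
  · exact htcover.trans (iUnion_mono fun n => hp1 n)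
  · calc ∑' n, ENNReal.ofReal ((p n).2 - (p n).1)
        ≤ ∑' n, (StieltjesFunction.id.length (t n) + δ n) := ENNReal.tsum_le_tsum hp2
    _ = (∑' n, StieltjesFunction.id.length (t n)) + ∑' n, (δ n : ℝ≥0∞) :=
        ENNReal.tsum_add
    _ ≤ (volume N + ε2) + ε2 := add_le_add htsum.le hδsum.le
    _ ≤ volume N + ε := by
        rw [add_assoc, hε2]
        gcongr
        simp [ENNReal.add_halves]


/-- For every `A ⊆ ℝ^d`, `γ(A) ≤ 2·λ*({‖x‖ : x ∈ A})`, where `λ*` is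
one-dimensional Lebesgue outer measure (in Mathlib, `volume` applied to an arbitrary subset
of `ℝ` computes the outer measure). -/
theorem gamma_le_norms_measure (d : ℕ) (hd : 1 ≤ d) (A : Set (EuclideanSpace ℝ (Fin d))) :
    gamma A ≤ 2 * volume ((fun x => ‖x‖) '' A) := by
  set N : Set ℝ := (fun x => ‖x‖) '' A with hN
  rcases eq_or_ne (volume N) ⊤ with htop | hfin
  · have h2 : 2 * volume N = ⊤ := by rw [htop]; simp
    rw [h2]
    exact le_top
  refine ENNReal.le_of_forall_pos_le_add fun ε hε _ => ?_
  have hε4 : ((ε : ℝ≥0∞) / 4) ≠ 0 := (ENNReal.div_pos (by exact_mod_cast hε.ne') (by norm_num)).ne'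
  obtain ⟨a, b, hcov, hsum⟩ := cover_by_Ioc N hfin hε4
  obtain ⟨δ, hδpos, hδsum⟩ := ENNReal.exists_pos_sum_of_countable hε4 ℕ
  -- net parameters
  set η : ℕ → ℝ := fun n => min 1 ((δ n : ℝ) / (|a n| + 1)) with hη
  have hηpos : ∀ n, 0 < η n := by
    intro n
    apply lt_min_iff.mpr
    constructor
    · norm_num
    · apply div_pos (by exact_mod_cast hδpos n)
      positivity
  have hηle1 : ∀ n, η n ≤ 1 := fun n => min_le_left _ _
  have hnets : ∀ n, ∃ (m : ℕ) (u : Fin (m+1) → EuclideanSpace ℝ (Fin d)),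
      (∀ i, ‖u i‖ = 1) ∧
      ∀ x : EuclideanSpace ℝ (Fin d), ∃ i, (1 - η n) * ‖x‖ ≤ ⟪u i, x⟫ :=
    fun n => exists_net hd (hηpos n)
  choose mf uf hu hnet using hnets
  set a' : ℕ → ℝ := fun n => max 0 ((1 - η n) * a n) with ha'
  set L : ℕ → ℝ := fun n => max (b n - a' n) (δ n : ℝ) with hLdef
  have hLpos : ∀ n, 0 < L n := fun n =>
    lt_of_lt_of_le (by exact_mod_cast hδpos n) (le_max_right _ _)
  set S : ℕ → Set (EuclideanSpace ℝ (Fin d)) :=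
    fun n => GStrip (annF (uf n) (L n) (a' n)) with hSdef
  have hstrip : ∀ n, IsGenStrip (S n) :=
    fun n => ⟨annF (uf n) (L n) (a' n), annF_polyhedral _ _ _, rfl⟩
  have hgmax_le_norm : ∀ n (x : EuclideanSpace ℝ (Fin d)), gmax (uf n) x ≤ ‖x‖ := by
    intro n x
    apply Finset.sup'_le
    intro i _
    have := real_inner_le_norm (uf n i) x
    rwa [hu n i, one_mul] at this
  have hcover : A ⊆ ⋃ n, S n := by
    intro x hx
    have hxN : ‖x‖ ∈ N := ⟨x, hx, rfl⟩
    obtain ⟨n, hn⟩ := mem_iUnion.mp (hcov hxN)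
    obtain ⟨hn1, hn2⟩ := hn
    refine mem_iUnion.mpr ⟨n, ?_⟩
    refine annulus_subset_gstrip (uf n) (hu n) (hLpos n) (a' n) ?_ ?_
    · -- a' n ≤ gmax
      obtain ⟨i, hi⟩ := hnet n x
      have hgi : ⟪uf n i, x⟫ ≤ gmax (uf n) x :=
        Finset.le_sup' (fun i => ⟪uf n i, x⟫) (Finset.mem_univ i)
      have h1mη : 0 ≤ 1 - η n := by linarith [hηle1 n]
      apply max_le
      · have : 0 ≤ (1 - η n) * ‖x‖ := by positivity
        linarith
      · have : (1 - η n) * a n ≤ (1 - η n) * ‖x‖ := by nlinarith [hn1, norm_nonneg x]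
        linarith
    · have h1 : gmax (uf n) x ≤ b n := (hgmax_le_norm n x).trans hn2
      have h2 : b n ≤ a' n + L n := by
        have := le_max_left (b n - a' n) ((δ n : ℝ))
        simp only [hLdef]
        linarith
      linarith
  -- width bound
  have hwidth : ∀ n, ENNReal.ofReal (stripWidth (S n)) ≤
      2 * ENNReal.ofReal (b n - a n) + 2 * (δ n : ℝ≥0∞) := by
    intro n
    have hmem : L n ∈ {L' : ℝ | 0 ≤ L' ∧ ∃ f, IsPolyhedral f ∧
        (∀ x y, |f x - f y| ≤ L' * ‖x - y‖) ∧ GStrip f = S n} :=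
      ⟨(hLpos n).le, annF (uf n) (L n) (a' n), annF_polyhedral _ _ _,
        fun x y => annF_lip (uf n) (hLpos n).le (a' n) (hu n) x y, rfl⟩
    have hbdd : BddBelow {L' : ℝ | 0 ≤ L' ∧ ∃ f, IsPolyhedral f ∧
        (∀ x y, |f x - f y| ≤ L' * ‖x - y‖) ∧ GStrip f = S n} := ⟨0, fun z hz => hz.1⟩
    have hsinf : sInf {L' : ℝ | 0 ≤ L' ∧ ∃ f, IsPolyhedral f ∧
        (∀ x y, |f x - f y| ≤ L' * ‖x - y‖) ∧ GStrip f = S n} ≤ L n := csInf_le hbdd hmem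
    have hw1 : stripWidth (S n) ≤ 2 * L n := by
      rw [stripWidth]
      linarith
    -- L n ≤ max (b n - a n) 0 + δ n
    have hδnn : (0:ℝ) ≤ (δ n : ℝ) := (δ n).2
    have ha'low : a n - (δ n : ℝ) ≤ a' n := by
      rcases le_or_gt (a n) 0 with h | h
      · have : (0:ℝ) ≤ a' n := le_max_left _ _
        linarith
      · have h1 : (1 - η n) * a n ≤ a' n := le_max_right _ _
        have h2 : η n * a n ≤ (δ n : ℝ) := by
          have hη2 : η n ≤ (δ n : ℝ) / (|a n| + 1) := min_le_right _ _
          have habs : |a n| = a n := abs_of_pos h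
          have h3 : (δ n : ℝ) / (a n + 1) * a n ≤ (δ n : ℝ) := by
            rw [div_mul_eq_mul_div, div_le_iff₀ (by linarith)]
            nlinarith
          calc η n * a n ≤ (δ n : ℝ) / (|a n| + 1) * a n := by nlinarith
          _ = (δ n : ℝ) / (a n + 1) * a n := by rw [habs]
          _ ≤ (δ n : ℝ) := h3
        nlinarith
    have hL_le : L n ≤ max (b n - a n) 0 + (δ n : ℝ) := by
      apply max_le
      · have : b n - a' n ≤ (b n - a n) + (δ n : ℝ) := by linarith
        calc b n - a' n ≤ (b n - a n) + (δ n : ℝ) := this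
        _ ≤ max (b n - a n) 0 + (δ n : ℝ) := by
            have := le_max_left (b n - a n) (0:ℝ); linarith
      · have := le_max_right (b n - a n) (0:ℝ); linarith
    calc ENNReal.ofReal (stripWidth (S n)) ≤ ENNReal.ofReal (2 * L n) :=
          ENNReal.ofReal_le_ofReal hw1
    _ ≤ ENNReal.ofReal (2 * (max (b n - a n) 0 + (δ n : ℝ))) := by
          apply ENNReal.ofReal_le_ofReal; linarith
    _ = ENNReal.ofReal (2 * max (b n - a n) 0) + ENNReal.ofReal (2 * (δ n : ℝ)) := by
          rw [mul_add, ENNReal.ofReal_add (by positivity) (by positivity)]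
    _ = 2 * ENNReal.ofReal (b n - a n) + 2 * (δ n : ℝ≥0∞) := by
          rw [ENNReal.ofReal_mul (by norm_num), ENNReal.ofReal_mul (by norm_num)]
          congr 1
          · congr 1
            · norm_num
            · rcases le_or_gt (b n - a n) 0 with h | h
              · rw [max_eq_right h, ENNReal.ofReal_of_nonpos h]; simp
              · rw [max_eq_left h.le]
          · congr 1
            · norm_num
            · simp [ENNReal.ofReal_coe_nnreal]
  -- assemble
  have hgamma : gamma A ≤ ∑' n, ENNReal.ofReal (stripWidth (S n)) :=
    sInf_le ⟨S, hstrip, hcover, rfl⟩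
  have hfinal : (∑' n, ENNReal.ofReal (stripWidth (S n))) ≤ 2 * volume N + ε := by
    calc (∑' n, ENNReal.ofReal (stripWidth (S n)))
        ≤ ∑' n, (2 * ENNReal.ofReal (b n - a n) + 2 * (δ n : ℝ≥0∞)) :=
          ENNReal.tsum_le_tsum hwidth
    _ = 2 * (∑' n, ENNReal.ofReal (b n - a n)) + 2 * (∑' n, (δ n : ℝ≥0∞)) := by
          rw [ENNReal.tsum_add, ENNReal.tsum_mul_left, ENNReal.tsum_mul_left]
    _ ≤ 2 * (volume N + (ε : ℝ≥0∞) / 4) + 2 * ((ε : ℝ≥0∞) / 4) :=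
          add_le_add (mul_le_mul_right hsum 2) (mul_le_mul_right hδsum.le 2)
    _ = 2 * volume N + (2 * ((ε : ℝ≥0∞) / 4) + 2 * ((ε : ℝ≥0∞) / 4)) := by ring
    _ ≤ 2 * volume N + (ε : ℝ≥0∞) := by
          gcongr
          have : 2 * ((ε : ℝ≥0∞) / 4) + 2 * ((ε : ℝ≥0∞) / 4) = 4 * ((ε : ℝ≥0∞) / 4) := by ring
          rw [this]
          rw [ENNReal.mul_div_cancel' (by norm_num) (by norm_num)]
  exact hgamma.trans hfinal
end
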